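/- arXiv:1708.07441 — 5 statements merged into one kernel-verified Lean document; each statement's English description precedes it below -/
import Mathlib

section
/- Let B ⊆ ℝⁿ be measurable, L_λ : ℝⁿ → ℝ bounded below by L_min on B, with ∫_B exp(-δ₀ L_λ(θ)) dθ finite and positive for δ₀ ≥ 0, and suppose ∫_B L_λ(θ)·exp(-δ₀ L_λ(θ)) dθ < ∞. Let C ⊆ B be measurable and define Δ(δ) = (∫_C exp(-δ L_λ(θ)) dθ) / (∫_B exp(-δ L_λ(θ)) dθ) for δ > δ₀. Then Δ is differentiable on (δ₀, ∞) with Δ'(δ) = (-1 + Δ(δ))·∫_C L_λ(θ) p_δ(θ) dθ + Δ(δ)·∫_{B∖C} L_λ(θ) p_δ(θ) dθ, where p_δ(θ) = exp(-δ L_λ(θ)) / ∫_B exp(-δ L_λ(γ)) dγ. -/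
/-!
On `B` we have `L ≥ Lmin`, so for `δ₀ ≤ t ≤ T` the weight `exp (-t L)` is at most
`exp ((T - δ₀) |Lmin|) · exp (-δ₀ L)`. Hence `exp (-t L)` and its `t`-derivative `-L exp (-t L)`
are dominated, locally uniformly in `t > δ₀`, by multiples of the integrable functions
`exp (-δ₀ L)` and `L exp (-δ₀ L)`. Differentiating under the integral sign, the numerator and
denominator of `Δ` have derivatives `-∫_C L e^{-δL}` and `-∫_B L e^{-δL}`; the quotient rule and
`∫_{B∖C} = ∫_B - ∫_C` give the formula.
-/

open MeasureTheory Real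

theorem exp_neg_mul_le_of_le {m x s t T : ℝ} (hx : m ≤ x) (hst : s ≤ t) (htT : t ≤ T) :
    exp (-t * x) ≤ exp ((T - s) * |m|) * exp (-s * x) := by
  rw [← exp_add, exp_le_exp]
  nlinarith [neg_abs_le m, abs_nonneg m]

section GibbsIntegral

variable {α : Type*} [MeasurableSpace α] {μ : Measure α} {L : α → ℝ} {m s t δ : ℝ}

theorem integrable_exp_neg_mul_of_le (hL : AEMeasurable L μ) (hm : ∀ᵐ x ∂μ, m ≤ L x)
    (hs : Integrable (fun x => exp (-s * L x)) μ) (hst : s ≤ t) :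
    Integrable (fun x => exp (-t * L x)) μ := by
  refine (hs.const_mul (exp ((t - s) * |m|))).mono' (by fun_prop) ?_
  filter_upwards [hm] with x hx
  rw [norm_of_nonneg (exp_pos _).le]
  exact exp_neg_mul_le_of_le hx hst le_rfl

theorem integrable_mul_exp_neg_mul_of_le (hL : AEMeasurable L μ) (hm : ∀ᵐ x ∂μ, m ≤ L x)
    (hs : Integrable (fun x => L x * exp (-s * L x)) μ) (hst : s ≤ t) :
    Integrable (fun x => L x * exp (-t * L x)) μ := by
  refine (hs.norm.const_mul (exp ((t - s) * |m|))).mono' (by fun_prop) ?_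
  filter_upwards [hm] with x hx
  rw [norm_mul, norm_mul, mul_left_comm, norm_of_nonneg (exp_pos _).le,
    norm_of_nonneg (exp_pos _).le]
  gcongr
  exact exp_neg_mul_le_of_le hx hst le_rfl

theorem hasDerivAt_integral_exp_neg_mul (hL : AEMeasurable L μ) (hm : ∀ᵐ x ∂μ, m ≤ L x)
    (hs : Integrable (fun x => exp (-s * L x)) μ)
    (hs' : Integrable (fun x => L x * exp (-s * L x)) μ) (hsδ : s < δ) :
    HasDerivAt (fun t => ∫ x, exp (-t * L x) ∂μ) (-∫ x, L x * exp (-δ * L x) ∂μ) δ := by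
  have hball : ∀ t ∈ Metric.ball δ (δ - s), s ≤ t ∧ t ≤ 2 * δ - s := by
    intro t ht
    rw [Metric.mem_ball, Real.dist_eq, abs_lt] at ht
    constructor <;> linarith
  have hderiv := hasDerivAt_integral_of_dominated_loc_of_deriv_le
    (F := fun t x => exp (-t * L x)) (F' := fun t x => -(L x * exp (-t * L x)))
    (bound := fun x => exp ((2 * δ - s - s) * |m|) * ‖L x * exp (-s * L x)‖)
    (Metric.ball_mem_nhds δ (sub_pos.2 hsδ)) (.of_forall fun t => by fun_prop)
    (integrable_exp_neg_mul_of_le hL hm hs hsδ.le) (by fun_prop) ?_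
    (hs'.norm.const_mul _) (.of_forall fun x t _ => ?_)
  · rw [integral_neg] at hderiv
    exact hderiv.2
  · filter_upwards [hm] with x hx t ht
    obtain ⟨hst, htT⟩ := hball t ht
    rw [norm_neg, norm_mul, norm_mul, mul_left_comm, norm_of_nonneg (exp_pos _).le,
      norm_of_nonneg (exp_pos _).le]
    gcongr
    exact exp_neg_mul_le_of_le hx hst htT
  · exact ((hasDerivAt_neg t).mul_const (L x)).exp.congr_deriv (by ring)

theorem integral_exp_neg_mul_pos (hpos : 0 < ∫ x, exp (-s * L x) ∂μ)
    (ht : Integrable (fun x => exp (-t * L x)) μ) : 0 < ∫ x, exp (-t * L x) ∂μ := by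
  have : NeZero μ := ⟨by rintro rfl; simp at hpos⟩
  exact integral_exp_pos ht

end GibbsIntegral

theorem stmt1_general {n : ℕ} (B C : Set (EuclideanSpace ℝ (Fin n)))
    (hB : MeasurableSet B) (hC : MeasurableSet C) (hCB : C ⊆ B)
    (Ll : EuclideanSpace ℝ (Fin n) → ℝ) (hLl : Measurable Ll)
    (Lmin δ₀ : ℝ)
    (hbdd : ∀ θ ∈ B, Lmin ≤ Ll θ)
    (hint : IntegrableOn (fun θ => Real.exp (-δ₀ * Ll θ)) B)
    (hpos : 0 < ∫ θ in B, Real.exp (-δ₀ * Ll θ))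
    (hint2 : IntegrableOn (fun θ => Ll θ * Real.exp (-δ₀ * Ll θ)) B) :
    ∀ δ, δ₀ < δ →
      HasDerivAt (fun t => (∫ θ in C, Real.exp (-t * Ll θ)) / (∫ θ in B, Real.exp (-t * Ll θ)))
        ((-1 + (∫ θ in C, Real.exp (-δ * Ll θ)) / (∫ θ in B, Real.exp (-δ * Ll θ))) *
            (∫ θ in C, Ll θ * (Real.exp (-δ * Ll θ) / ∫ γ in B, Real.exp (-δ * Ll γ))) +
          ((∫ θ in C, Real.exp (-δ * Ll θ)) / (∫ θ in B, Real.exp (-δ * Ll θ))) *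
            (∫ θ in B \ C, Ll θ * (Real.exp (-δ * Ll θ) / ∫ γ in B, Real.exp (-δ * Ll γ))))
        δ := by
  intro δ hδ
  have hmB := ae_restrict_of_forall_mem (μ := volume) hB hbdd
  have hmC := ae_restrict_of_forall_mem (μ := volume) hC fun θ hθ => hbdd θ (hCB hθ)
  have hderivB := hasDerivAt_integral_exp_neg_mul hLl.aemeasurable hmB hint hint2 hδ
  have hderivC := hasDerivAt_integral_exp_neg_mul hLl.aemeasurable hmC
    (hint.mono_set hCB) (hint2.mono_set hCB) hδ
  have hZpos : 0 < ∫ θ in B, exp (-δ * Ll θ) :=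
    integral_exp_neg_mul_pos hpos (integrable_exp_neg_mul_of_le hLl.aemeasurable hmB hint hδ.le)
  refine (hderivC.div hderivB hZpos.ne').congr_deriv ?_
  simp_rw [← mul_div_assoc, integral_div]
  rw [setIntegral_sdiff hC
    (integrable_mul_exp_neg_mul_of_le hLl.aemeasurable hmB hint2 hδ.le) hCB]
  -- Naming the integrals keeps `field_simp` from rewriting inside the integrands.
  set Z := ∫ θ in B, exp (-δ * Ll θ)
  set ZC := ∫ θ in C, exp (-δ * Ll θ)
  set IB := ∫ θ in B, Ll θ * exp (-δ * Ll θ)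
  set IC := ∫ θ in C, Ll θ * exp (-δ * Ll θ)
  field_simp
  ring

theorem stmt1 {n : ℕ} (B C : Set (EuclideanSpace ℝ (Fin n)))
    (hB : MeasurableSet B) (hC : MeasurableSet C) (hCB : C ⊆ B)
    (Ll : EuclideanSpace ℝ (Fin n) → ℝ) (hLl : Measurable Ll)
    (Lmin δ₀ : ℝ) (hδ₀ : 0 ≤ δ₀)
    (hbdd : ∀ θ ∈ B, Lmin ≤ Ll θ)
    (hint : IntegrableOn (fun θ => Real.exp (-δ₀ * Ll θ)) B)
    (hpos : 0 < ∫ θ in B, Real.exp (-δ₀ * Ll θ))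
    (hint2 : IntegrableOn (fun θ => Ll θ * Real.exp (-δ₀ * Ll θ)) B) :
    ∀ δ, δ₀ < δ →
      HasDerivAt (fun t => (∫ θ in C, Real.exp (-t * Ll θ)) / (∫ θ in B, Real.exp (-t * Ll θ)))
        ((-1 + (∫ θ in C, Real.exp (-δ * Ll θ)) / (∫ θ in B, Real.exp (-δ * Ll θ))) *
            (∫ θ in C, Ll θ * (Real.exp (-δ * Ll θ) / ∫ γ in B, Real.exp (-δ * Ll γ))) +
          ((∫ θ in C, Real.exp (-δ * Ll θ)) / (∫ θ in B, Real.exp (-δ * Ll θ))) *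
            (∫ θ in B \ C, Ll θ * (Real.exp (-δ * Ll θ) / ∫ γ in B, Real.exp (-δ * Ll γ))))
        δ :=
  stmt1_general B C hB hC hCB Ll hLl Lmin δ₀ hbdd hint hpos hint2
end

section
/- With the setup of the previous statement, and with C = {θ ∈ B : L_λ(θ) ≤ M_λ} for a fixed threshold M_λ, suppose both C and B∖C have positive measure. Then Δ is strictly increasing on (δ₀, ∞); in fact Δ'(δ) > 0 for all δ > δ₀. -/
/-!
Write `Z_S(t) = ∫_S exp (-t L)` and `A_S(t) = ∫_S L exp (-t L)`, so that `Z_S' = -A_S` by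
differentiation under the integral sign: for `L ≥ m` and `t` near `δ > δ₀` the derivative is
dominated by `exp ((t - δ₀) |m|) · |L| exp (-δ₀ L)`. With `C = {L ≤ M}` and `D = {M < L}`,
the quotient rule and `Z = Z_C + Z_D`, `A = A_C + A_D` give `(Z_C / Z)' · Z² = Z_C A_D - Z_D A_C`,
and `A_C ≤ M Z_C`, `M Z_D < A_D` make this positive.
-/

open MeasureTheory Real Set

lemma exp_neg_mul_le_of_mem_Icc {m L δ₀ b x : ℝ} (hL : m ≤ L) (hx : x ∈ Icc δ₀ b) :
    exp (-x * L) ≤ exp ((b - δ₀) * |m|) * exp (-δ₀ * L) := by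
  rw [← exp_add, exp_le_exp]
  nlinarith [hx.1, hx.2, neg_abs_le m, le_abs_self m]

namespace MeasureTheory

variable {α : Type*} [MeasurableSpace α] {μ : Measure α} {L : α → ℝ} {m δ₀ : ℝ}

section Integrability

variable (hL : Measurable L) (hm : ∀ᵐ θ ∂μ, m ≤ L θ)
include hL hm

lemma Integrable.exp_neg_mul_of_le (h : Integrable (fun θ => exp (-δ₀ * L θ)) μ) {t : ℝ}
    (ht : δ₀ ≤ t) : Integrable (fun θ => exp (-t * L θ)) μ := by
  refine (h.const_mul (exp ((t - δ₀) * |m|))).mono'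
    (hL.const_mul (-t)).exp.aestronglyMeasurable ?_
  filter_upwards [hm] with θ hθ
  rw [norm_of_nonneg (exp_pos _).le]
  exact exp_neg_mul_le_of_mem_Icc hθ ⟨ht, le_rfl⟩

lemma Integrable.mul_exp_neg_mul_of_le (h : Integrable (fun θ => L θ * exp (-δ₀ * L θ)) μ)
    {t : ℝ} (ht : δ₀ ≤ t) : Integrable (fun θ => L θ * exp (-t * L θ)) μ := by
  refine (h.norm.const_mul (exp ((t - δ₀) * |m|))).mono'
    (hL.mul (hL.const_mul (-t)).exp).aestronglyMeasurable ?_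
  filter_upwards [hm] with θ hθ
  rw [norm_mul, norm_mul, norm_of_nonneg (exp_pos _).le, norm_of_nonneg (exp_pos _).le,
    mul_left_comm]
  exact mul_le_mul_of_nonneg_left (exp_neg_mul_le_of_mem_Icc hθ ⟨ht, le_rfl⟩) (norm_nonneg _)

lemma hasDerivAt_integral_exp_neg_mul (h₀ : Integrable (fun θ => exp (-δ₀ * L θ)) μ)
    (h₁ : Integrable (fun θ => L θ * exp (-δ₀ * L θ)) μ) {δ : ℝ} (hδ : δ₀ < δ) :
    HasDerivAt (fun t => ∫ θ, exp (-t * L θ) ∂μ) (-∫ θ, L θ * exp (-δ * L θ) ∂μ) δ := by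
  set ε := (δ - δ₀) / 2 with hε_def
  have hε : 0 < ε := by linarith
  rw [← integral_neg]
  refine (hasDerivAt_integral_of_dominated_loc_of_deriv_le (x₀ := δ)
    (F' := fun t θ => -(L θ * exp (-t * L θ)))
    (bound := fun θ => exp ((δ + ε - δ₀) * |m|) * ‖L θ * exp (-δ₀ * L θ)‖)
    (Metric.ball_mem_nhds δ hε)
    (.of_forall fun t => (hL.const_mul (-t)).exp.aestronglyMeasurable)
    (h₀.exp_neg_mul_of_le hL hm hδ.le)
    (hL.mul (hL.const_mul (-δ)).exp).neg.aestronglyMeasurable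
    ?_ (h₁.norm.const_mul _) ?_).2
  · filter_upwards [hm] with θ hθ t ht
    rw [Metric.mem_ball, Real.dist_eq, abs_lt] at ht
    rw [norm_neg, norm_mul, norm_mul, norm_of_nonneg (exp_pos _).le,
      norm_of_nonneg (exp_pos _).le, mul_left_comm]
    exact mul_le_mul_of_nonneg_left
      (exp_neg_mul_le_of_mem_Icc hθ ⟨by linarith, by linarith⟩) (norm_nonneg _)
  · refine .of_forall fun θ t _ => ?_
    simpa [neg_mul, mul_comm] using ((hasDerivAt_id t).neg.mul_const (L θ)).exp

end Integrability

section Comparison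

variable {s : Set α} {w : α → ℝ} {M : ℝ}

lemma setIntegral_exp_pos (hμs : 0 < μ s) {f : α → ℝ}
    (hf : IntegrableOn (fun θ => exp (f θ)) s μ) : 0 < ∫ θ in s, exp (f θ) ∂μ := by
  rw [setIntegral_pos_iff_support_of_nonneg_ae (.of_forall fun _ => (exp_pos _).le) hf]
  simpa [Function.support, exp_ne_zero] using hμs

lemma setIntegral_mul_le_of_le (hs : MeasurableSet s) (hLs : ∀ θ ∈ s, L θ ≤ M)
    (hw : ∀ θ, 0 ≤ w θ) (hLw : IntegrableOn (fun θ => L θ * w θ) s μ)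
    (hwi : IntegrableOn w s μ) : ∫ θ in s, L θ * w θ ∂μ ≤ M * ∫ θ in s, w θ ∂μ := by
  rw [← integral_const_mul]
  exact setIntegral_mono_on hLw (hwi.const_mul M) hs fun θ hθ =>
    mul_le_mul_of_nonneg_right (hLs θ hθ) (hw θ)

lemma lt_setIntegral_mul_of_lt (hs : MeasurableSet s) (hμs : 0 < μ s)
    (hLs : ∀ θ ∈ s, M < L θ) (hw : ∀ θ, 0 < w θ) (hLw : IntegrableOn (fun θ => L θ * w θ) s μ)
    (hwi : IntegrableOn w s μ) : M * ∫ θ in s, w θ ∂μ < ∫ θ in s, L θ * w θ ∂μ := by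
  have hpos : ∀ θ ∈ s, 0 < (L θ - M) * w θ := fun θ hθ =>
    mul_pos (sub_pos.2 (hLs θ hθ)) (hw θ)
  have hint : IntegrableOn (fun θ => (L θ - M) * w θ) s μ := by
    simp_rw [sub_mul]
    exact hLw.sub (hwi.const_mul M)
  have : 0 < ∫ θ in s, (L θ - M) * w θ ∂μ := by
    rw [setIntegral_pos_iff_support_of_nonneg_ae
      (ae_restrict_of_forall_mem hs fun θ hθ => (hpos θ hθ).le) hint]
    exact hμs.trans_le (measure_mono fun θ hθ => ⟨(hpos θ hθ).ne', hθ⟩)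
  simp_rw [sub_mul] at this
  rw [integral_sub hLw (hwi.const_mul M), integral_const_mul] at this
  linarith

end Comparison

/-- `gibbsMass (volume.restrict B) L C δ` is the paper's `Δ(δ) = ∫_C p_δ`. -/
noncomputable def gibbsMass (μ : Measure α) (L : α → ℝ) (s : Set α) (t : ℝ) : ℝ :=
  (∫ θ in s, exp (-t * L θ) ∂μ) / ∫ θ, exp (-t * L θ) ∂μ

theorem exists_hasDerivAt_gibbsMass_setOf_le_pos {M : ℝ} (hL : Measurable L)
    (hm : ∀ᵐ θ ∂μ, m ≤ L θ) (h₀ : Integrable (fun θ => exp (-δ₀ * L θ)) μ)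
    (h₁ : Integrable (fun θ => L θ * exp (-δ₀ * L θ)) μ)
    (hC : 0 < μ {θ | L θ ≤ M}) (hD : 0 < μ {θ | M < L θ}) {δ : ℝ} (hδ : δ₀ < δ) :
    ∃ v, 0 < v ∧ HasDerivAt (gibbsMass μ L {θ | L θ ≤ M}) v δ := by
  set C := {θ | L θ ≤ M}
  have hCm : MeasurableSet C := measurableSet_le hL measurable_const
  have hDC : Cᶜ = {θ | M < L θ} := by ext; simp [C]
  have hw := h₀.exp_neg_mul_of_le hL hm hδ.le
  have hLw := h₁.mul_exp_neg_mul_of_le hL hm hδ.le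
  have hZC := hasDerivAt_integral_exp_neg_mul (μ := μ.restrict C) hL (ae_restrict_of_ae hm)
    h₀.restrict h₁.restrict hδ
  have hZ := hasDerivAt_integral_exp_neg_mul hL hm h₀ h₁ hδ
  have hZC_pos : 0 < ∫ θ in C, exp (-δ * L θ) ∂μ := setIntegral_exp_pos hC hw.integrableOn
  have hZD_pos : 0 < ∫ θ in Cᶜ, exp (-δ * L θ) ∂μ :=
    setIntegral_exp_pos (hDC ▸ hD) hw.integrableOn
  have hAC : ∫ θ in C, L θ * exp (-δ * L θ) ∂μ ≤ M * ∫ θ in C, exp (-δ * L θ) ∂μ :=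
    setIntegral_mul_le_of_le hCm (fun _ h => h) (fun _ => (exp_pos _).le)
      hLw.integrableOn hw.integrableOn
  have hAD : M * ∫ θ in Cᶜ, exp (-δ * L θ) ∂μ < ∫ θ in Cᶜ, L θ * exp (-δ * L θ) ∂μ :=
    lt_setIntegral_mul_of_lt hCm.compl (hDC ▸ hD) (fun _ h => lt_of_not_ge h)
      (fun _ => exp_pos _) hLw.integrableOn hw.integrableOn
  have hZ_split := integral_add_compl hCm hw
  have hA_split := integral_add_compl hCm hLw
  refine ⟨_, div_pos ?_ (pow_pos (hZ_split ▸ add_pos hZC_pos hZD_pos) 2),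
    hZC.div hZ (hZ_split ▸ add_pos hZC_pos hZD_pos).ne'⟩
  rw [← hZ_split, ← hA_split]
  nlinarith

end MeasureTheory

theorem stmt2_general {n : ℕ} (B : Set (EuclideanSpace ℝ (Fin n))) (hB : MeasurableSet B)
    (Ll : EuclideanSpace ℝ (Fin n) → ℝ) (hLl : Measurable Ll)
    (Lmin δ₀ Ml : ℝ)
    (hbdd : ∀ θ ∈ B, Lmin ≤ Ll θ)
    (hint : IntegrableOn (fun θ => Real.exp (-δ₀ * Ll θ)) B)
    (hint2 : IntegrableOn (fun θ => Ll θ * Real.exp (-δ₀ * Ll θ)) B)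
    (C : Set (EuclideanSpace ℝ (Fin n))) (hCdef : C = {θ ∈ B | Ll θ ≤ Ml})
    (hCpos : 0 < volume C) (hBCpos : 0 < volume (B \ C)) :
    StrictMonoOn
        (fun t => (∫ θ in C, Real.exp (-t * Ll θ)) / (∫ θ in B, Real.exp (-t * Ll θ)))
        (Set.Ioi δ₀) ∧
      ∀ δ ∈ Set.Ioi δ₀,
        0 < deriv (fun t => (∫ θ in C, Real.exp (-t * Ll θ)) /
            (∫ θ in B, Real.exp (-t * Ll θ))) δ := by
  set Δ := gibbsMass (volume.restrict B) Ll {θ | Ll θ ≤ Ml} with hΔ_def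
  have hsublevel : MeasurableSet {θ | Ll θ ≤ Ml} := measurableSet_le hLl measurable_const
  have hC : C = {θ | Ll θ ≤ Ml} ∩ B := by ext; simp [hCdef, and_comm]
  have hBC : B \ C = {θ | Ml < Ll θ} ∩ B := by
    ext θ; by_cases hθ : θ ∈ B <;> simp [hCdef, hθ]
  have hΔ : (fun t => (∫ θ in C, exp (-t * Ll θ)) / ∫ θ in B, exp (-t * Ll θ)) = Δ := by
    funext t
    rw [hΔ_def, gibbsMass, Measure.restrict_restrict hsublevel, ← hC]
  have hasDeriv : ∀ δ ∈ Ioi δ₀, ∃ v, 0 < v ∧ HasDerivAt Δ v δ := fun δ hδ =>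
    exists_hasDerivAt_gibbsMass_setOf_le_pos hLl (ae_restrict_of_forall_mem hB hbdd) hint hint2
      (by rwa [Measure.restrict_apply hsublevel, ← hC])
      (by rwa [Measure.restrict_apply (measurableSet_lt measurable_const hLl), ← hBC]) hδ
  have deriv_pos : ∀ δ ∈ Ioi δ₀, 0 < deriv Δ δ := fun δ hδ => by
    obtain ⟨v, hv, hΔv⟩ := hasDeriv δ hδ
    rwa [hΔv.deriv]
  rw [hΔ]
  exact ⟨strictMonoOn_of_deriv_pos (convex_Ioi δ₀)
    (fun δ hδ => (hasDeriv δ hδ).choose_spec.2.continuousAt.continuousWithinAt)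
    (by rwa [interior_Ioi]), deriv_pos⟩

theorem stmt2 {n : ℕ} (B : Set (EuclideanSpace ℝ (Fin n))) (hB : MeasurableSet B)
    (Ll : EuclideanSpace ℝ (Fin n) → ℝ) (hLl : Measurable Ll)
    (Lmin δ₀ Ml : ℝ) (hδ₀ : 0 ≤ δ₀)
    (hbdd : ∀ θ ∈ B, Lmin ≤ Ll θ)
    (hint : IntegrableOn (fun θ => Real.exp (-δ₀ * Ll θ)) B)
    (hpos : 0 < ∫ θ in B, Real.exp (-δ₀ * Ll θ))
    (hint2 : IntegrableOn (fun θ => Ll θ * Real.exp (-δ₀ * Ll θ)) B)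
    (C : Set (EuclideanSpace ℝ (Fin n))) (hCdef : C = {θ ∈ B | Ll θ ≤ Ml})
    (hCpos : 0 < volume C) (hBCpos : 0 < volume (B \ C)) :
    StrictMonoOn
        (fun t => (∫ θ in C, Real.exp (-t * Ll θ)) / (∫ θ in B, Real.exp (-t * Ll θ)))
        (Set.Ioi δ₀) ∧
      ∀ δ ∈ Set.Ioi δ₀,
        0 < deriv (fun t => (∫ θ in C, Real.exp (-t * Ll θ)) /
            (∫ θ in B, Real.exp (-t * Ll θ))) δ :=
  stmt2_general B hB Ll hLl Lmin δ₀ Ml hbdd hint hint2 C hCdef hCpos hBCpos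
end

section
/- Let B ⊆ ℝⁿ be a bounded measurable set, L_λ : ℝⁿ → ℝ continuous and bounded below on B, M_λ ∈ ℝ, and suppose there exists θ' in the interior of B with L_λ(θ') < M_λ. Let C = {θ ∈ B : L_λ(θ) ≤ M_λ} and Δ(δ) = (∫_C exp(-δ L_λ)) / (∫_B exp(-δ L_λ)). Then for every α ∈ (0,1) there exists δ > 0 such that Δ(δ) > α; i.e., Δ(δ) → 1 as δ → ∞ along a suitable sequence. -/
/-!
Off `C` the Gibbs weight `exp (-δ L)` is at most `exp (-δ M)`, while on a ball around `θ'` on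
which `L ≤ M' < M` it is at least `exp (-δ M')`. Hence the mass of `B \ C` relative to that of
`C` is `O(exp (-(M - M') δ))`, and the share of `C` in the mass of `B` tends to `1` as `δ → ∞`.
-/

open MeasureTheory Real
open Filter Topology Set
open scoped ENNReal

theorem ContinuousOn.measurableSet_inter_preimage {α β : Type*} [TopologicalSpace α]
    [MeasurableSpace α] [OpensMeasurableSpace α] [TopologicalSpace β] {f : α → β} {s : Set α}
    {t : Set β} (hf : ContinuousOn f s) (hs : MeasurableSet s) (ht : IsClosed t) :
    MeasurableSet (s ∩ f ⁻¹' t) := by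
  obtain ⟨u, hu, hfu⟩ := continuousOn_iff_isClosed.1 hf t ht
  rw [inter_comm, hfu]
  exact hu.measurableSet.inter hs

section GibbsWeights

variable {X : Type*} [MeasurableSpace X] {μ : Measure X} {L : X → ℝ} {B C D S : Set X}
  {δ m M M' : ℝ}

theorem integrableOn_exp_neg_mul_of_le (hB : MeasurableSet B) (hμB : μ B ≠ ∞)
    (hL : AEMeasurable L (μ.restrict B)) (hm : ∀ x ∈ B, m ≤ L x) (hδ : 0 ≤ δ) :
    IntegrableOn (fun x => exp (-δ * L x)) B μ := by
  refine .of_bound hμB.lt_top (by fun_prop) (exp (-δ * m)) (ae_restrict_of_forall_mem hB ?_)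
  intro x hx
  rw [norm_of_nonneg (exp_pos _).le, exp_le_exp]
  nlinarith [hm x hx]

theorem setIntegral_exp_neg_mul_le (hμD : μ D ≠ ∞) (hLD : ∀ x ∈ D, m ≤ L x) (hδ : 0 ≤ δ) :
    ∫ x in D, exp (-δ * L x) ∂μ ≤ exp (-δ * m) * μ.real D := by
  refine (le_norm_self _).trans (norm_setIntegral_le_of_norm_le_const hμD.lt_top fun x hx => ?_)
  rw [norm_of_nonneg (exp_pos _).le, exp_le_exp]
  nlinarith [hLD x hx]

theorem exp_neg_mul_le_setIntegral_of_subset (hS : MeasurableSet S) (hμS : μ S ≠ ∞)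
    (hSC : S ⊆ C) (hint : IntegrableOn (fun x => exp (-δ * L x)) C μ) (hLS : ∀ x ∈ S, L x ≤ M')
    (hδ : 0 ≤ δ) :
    exp (-δ * M') * μ.real S ≤ ∫ x in C, exp (-δ * L x) ∂μ := by
  refine (setIntegral_ge_of_const_le_real hS hμS (fun x hx => ?_) (hint.mono_set hSC)).trans
    (setIntegral_mono_set hint (ae_of_all _ fun _ => (exp_pos _).le) hSC.eventuallyLE)
  rw [exp_le_exp]
  nlinarith [hLS x hx]

theorem setIntegral_exp_neg_mul_div_le (hμD : μ D ≠ ∞) (hLD : ∀ x ∈ D, M ≤ L x)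
    (hμC : μ C ≠ ∞) (hint : IntegrableOn (fun x => exp (-δ * L x)) C μ)
    (hS : MeasurableSet S) (hSC : S ⊆ C) (hμS : 0 < μ S) (hLS : ∀ x ∈ S, L x ≤ M')
    (hδ : 0 ≤ δ) :
    (∫ x in D, exp (-δ * L x) ∂μ) / ∫ x in C, exp (-δ * L x) ∂μ ≤
      μ.real D / μ.real S * exp (-((M - M') * δ)) := by
  have hμS' : μ S ≠ ∞ := measure_ne_top_of_subset hSC hμC
  have : 0 < μ.real S := ENNReal.toReal_pos hμS.ne' hμS'
  calc (∫ x in D, exp (-δ * L x) ∂μ) / ∫ x in C, exp (-δ * L x) ∂μ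
      ≤ exp (-δ * M) * μ.real D / (exp (-δ * M') * μ.real S) :=
        div_le_div₀ (by positivity) (setIntegral_exp_neg_mul_le hμD hLD hδ) (by positivity)
          (exp_neg_mul_le_setIntegral_of_subset hS hμS' hSC hint hLS hδ)
    _ = μ.real D / μ.real S * exp (-((M - M') * δ)) := by
        rw [mul_div_mul_comm, ← exp_sub]; ring_nf

theorem tendsto_setIntegral_exp_neg_mul_div_atTop (hB : MeasurableSet B)
    (hμB : μ B ≠ ∞) (hL : AEMeasurable L (μ.restrict B)) (hm : ∀ x ∈ B, m ≤ L x)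
    (hC : MeasurableSet C) (hCB : C ⊆ B) (hLC : ∀ x ∈ B \ C, M ≤ L x)
    (hS : MeasurableSet S) (hSC : S ⊆ C) (hμS : 0 < μ S) (hLS : ∀ x ∈ S, L x ≤ M')
    (hM : M' < M) :
    Tendsto (fun δ => (∫ x in C, exp (-δ * L x) ∂μ) / ∫ x in B, exp (-δ * L x) ∂μ)
      atTop (𝓝 1) := by
  have hint : ∀ δ ≥ 0, IntegrableOn (fun x => exp (-δ * L x)) B μ := fun δ hδ =>
    integrableOn_exp_neg_mul_of_le hB hμB hL hm hδ
  have hμC : μ C ≠ ∞ := measure_ne_top_of_subset hCB hμB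
  have hμS' : μ S ≠ ∞ := measure_ne_top_of_subset hSC hμC
  have : 0 < μ.real S := ENNReal.toReal_pos hμS.ne' hμS'
  have hpos : ∀ δ ≥ 0, 0 < ∫ x in C, exp (-δ * L x) ∂μ := fun δ hδ =>
    lt_of_lt_of_le (by positivity) <| exp_neg_mul_le_setIntegral_of_subset hS hμS' hSC ((hint δ hδ).mono_set hCB) hLS hδ
  have htail : Tendsto (fun δ => (∫ x in B \ C, exp (-δ * L x) ∂μ) / ∫ x in C, exp (-δ * L x) ∂μ)
      atTop (𝓝 0) := by
    have hbound : Tendsto (fun δ => μ.real (B \ C) / μ.real S * exp (-((M - M') * δ)))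
        atTop (𝓝 0) := by
      simpa using (tendsto_exp_neg_atTop_nhds_zero.comp
        (tendsto_id.const_mul_atTop (sub_pos.2 hM))).const_mul (μ.real (B \ C) / μ.real S)
    refine tendsto_of_tendsto_of_tendsto_of_le_of_le' tendsto_const_nhds hbound ?_ ?_
    · filter_upwards [eventually_ge_atTop 0] with δ hδ
      exact div_nonneg (setIntegral_nonneg (hB.diff hC) fun _ _ => (exp_pos _).le) (hpos δ hδ).le
    · filter_upwards [eventually_ge_atTop 0] with δ hδ
      exact setIntegral_exp_neg_mul_div_le (measure_ne_top_of_subset sdiff_subset hμB) hLC hμC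
        ((hint δ hδ).mono_set hCB) hS hSC hμS hLS hδ
  have hlim := ((tendsto_const_nhds (x := (1 : ℝ))).add htail).inv₀ (by norm_num)
  rw [add_zero, inv_one] at hlim
  refine hlim.congr' ?_
  filter_upwards [eventually_ge_atTop 0] with δ hδ
  rw [← integral_inter_add_sdiff hC (hint δ hδ), inter_eq_right.2 hCB]
  rw [one_add_div (hpos δ hδ).ne', inv_div]

end GibbsWeights

theorem stmt3 {n : ℕ} (B : Set (EuclideanSpace ℝ (Fin n))) (hB : MeasurableSet B)
    (hBbdd : Bornology.IsBounded B)
    (Ll : EuclideanSpace ℝ (Fin n) → ℝ) (hLl : ContinuousOn Ll B)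
    (Lmin : ℝ) (hbdd : ∀ θ ∈ B, Lmin ≤ Ll θ)
    (Ml : ℝ) (θ' : EuclideanSpace ℝ (Fin n)) (hθ' : θ' ∈ interior B)
    (hθ'M : Ll θ' < Ml)
    (C : Set (EuclideanSpace ℝ (Fin n))) (hCdef : C = {θ ∈ B | Ll θ ≤ Ml}) :
    ∀ α ∈ Set.Ioo (0 : ℝ) 1, ∃ δ > (0 : ℝ),
      (∫ θ in C, Real.exp (-δ * Ll θ)) / (∫ θ in B, Real.exp (-δ * Ll θ)) > α := by
  intro α hα
  obtain ⟨M', hθ'M', hM'⟩ := exists_between hθ'M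
  have hBθ' : ∀ᶠ x in 𝓝 θ', x ∈ B := mem_interior_iff_mem_nhds.1 hθ'
  obtain ⟨r, hr, hball⟩ := Metric.eventually_nhds_iff_ball.1 <|
    hBθ'.and ((hLl.continuousAt hBθ').eventually (gt_mem_nhds hθ'M'))
  have hC : MeasurableSet C := hCdef ▸ hLl.measurableSet_inter_preimage hB isClosed_Iic
  have hlim := tendsto_setIntegral_exp_neg_mul_div_atTop hB hBbdd.measure_lt_top.ne
    (hLl.aemeasurable hB) hbdd hC (hCdef ▸ sep_subset B _)
    (fun x hx => le_of_not_ge fun h => hx.2 (hCdef ▸ ⟨hx.1, h⟩)) measurableSet_ball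
    (fun x hx => hCdef ▸ ⟨(hball x hx).1, ((hball x hx).2.trans hM').le⟩)
    (Metric.measure_ball_pos volume θ' hr) (fun x hx => (hball x hx).2.le) hM'
  exact ((eventually_gt_atTop 0).and (hlim.eventually (lt_mem_nhds hα.2))).exists
end

section
/- Under the hypotheses of the previous two statements (B bounded measurable, L_λ continuous on B, existence of interior θ' with L_λ(θ') < M_λ, and C, B∖C of positive measure), for every α ∈ (Δ(δ₀), 1) the equation Δ(δ) = α has a unique solution δ ∈ (δ₀, ∞). -/
/-!
Write `Z_S(δ) = ∫_S exp (-δ L)`, so that `Δ = Z_C / (Z_C + Z_D)` with `D = B \ C`, and `Δ` is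
increasing exactly when `Z_D / Z_C` is decreasing. Passing from `δ = a` to `δ = b > a` multiplies
the integrand by `exp (-(b - a) L)`, which is at least `exp (-(b - a) M)` on `C` (where `L ≤ M`)
and strictly smaller on `D` (where `L > M`); hence `Z_D / Z_C` is strictly decreasing.
Near `θ'`, `L` stays below some `M' < M` on an open set, so `Z_C ≳ exp (-δ M')` while
`Z_D ≲ exp (-δ M)`; thus `Z_D / Z_C → 0` and `Δ → 1`, and the intermediate value theorem
together with strict monotonicity gives the unique solution.
-/

open MeasureTheory Real Set Filter Topology
open scoped ENNReal

section

variable {X : Type*} [MeasurableSpace X] {μ : Measure X} {s : Set X}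

lemma setIntegral_pos_of_forall_pos {f : X → ℝ} (hs : MeasurableSet s) (hμ : 0 < μ s)
    (hf : IntegrableOn f s μ) (hpos : ∀ x ∈ s, 0 < f x) : 0 < ∫ x in s, f x ∂μ := by
  rw [setIntegral_pos_iff_support_of_nonneg_ae
    ((ae_restrict_mem hs).mono fun x hx => (hpos x hx).le) hf,
    inter_eq_right.2 fun x hx => Function.mem_support.2 (hpos x hx).ne']
  exact hμ

lemma neg_mul_le_mul_of_abs_le {δ c y K : ℝ} (hδ : |δ| ≤ c) (hy : |y| ≤ K) : -δ * y ≤ c * K :=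
  calc -δ * y ≤ |δ| * |y| := by rw [← abs_mul, neg_mul]; exact neg_le_abs _
    _ ≤ c * K := mul_le_mul hδ hy (abs_nonneg y) ((abs_nonneg δ).trans hδ)

lemma existsUnique_Ioi_eq_of_strictMono {f : ℝ → ℝ} {a l y : ℝ} (hf : Continuous f)
    (hmono : StrictMono f) (hlim : Tendsto f atTop (𝓝 l)) (hay : f a < y) (hyl : y < l) :
    ∃! x, x ∈ Ioi a ∧ f x = y := by
  obtain ⟨b, hab, hyb⟩ := ((eventually_gt_atTop a).and (hlim.eventually (lt_mem_nhds hyl))).exists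
  obtain ⟨x, -, hx⟩ := intermediate_value_Icc hab.le hf.continuousOn ⟨hay.le, hyb.le⟩
  refine ⟨x, ⟨hmono.lt_iff_lt.1 (hx ▸ hay), hx⟩, fun z hz => hmono.injective (hz.2.trans hx.symm)⟩

lemma div_add_eq_inv_one_add_div {a b : ℝ} (ha : a ≠ 0) : a / (a + b) = (1 + b / a)⁻¹ := by
  rw [one_add_div ha, inv_div]

lemma strictMono_div_add {α : Type*} [Preorder α] {f g : α → ℝ} (hf : ∀ x, 0 < f x) (hg : ∀ x, 0 ≤ g x)
    (h : StrictAnti fun x => g x / f x) : StrictMono fun x => f x / (f x + g x) := by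
  intro a b hab
  simp only [div_add_eq_inv_one_add_div (hf _).ne']
  have := h hab
  exact (inv_lt_inv₀ (by positivity [hf a, hg a]) (by positivity [hf b, hg b])).2 (by linarith)

lemma tendsto_div_add_nhds_one {α : Type*} {f g : α → ℝ} {l : Filter α} (hf : ∀ x, 0 < f x)
    (h : Tendsto (fun x => g x / f x) l (𝓝 0)) :
    Tendsto (fun x => f x / (f x + g x)) l (𝓝 1) := by
  simp only [div_add_eq_inv_one_add_div (hf _).ne']
  simpa using (tendsto_const_nhds.add h).inv₀ (by norm_num : (1 : ℝ) + 0 ≠ 0)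

end

noncomputable def partitionFunction {X : Type*} [MeasurableSpace X] (μ : Measure X) (L : X → ℝ)
    (s : Set X) (δ : ℝ) : ℝ :=
  ∫ x in s, exp (-δ * L x) ∂μ

section PartitionFunction

variable {X : Type*} [MeasurableSpace X] {μ : Measure X} {L : X → ℝ} {s t u : Set X} {K M : ℝ}

local notation "Z" => partitionFunction μ L

lemma integrableOn_exp_neg_mul (hL : Measurable L) (hs : MeasurableSet s) (hμs : μ s ≠ ∞)
    (hK : ∀ x ∈ s, |L x| ≤ K) (δ : ℝ) : IntegrableOn (fun x => exp (-δ * L x)) s μ := by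
  refine Measure.integrableOn_of_bounded (M := exp (|δ| * K)) hμs (by fun_prop) ?_
  filter_upwards [ae_restrict_mem hs] with x hx
  rw [norm_of_nonneg (exp_pos _).le]
  exact exp_le_exp.2 (neg_mul_le_mul_of_abs_le le_rfl (hK x hx))

lemma partitionFunction_pos (hL : Measurable L) (hs : MeasurableSet s) (hμs : μ s ≠ ∞)
    (hK : ∀ x ∈ s, |L x| ≤ K) (hμ : 0 < μ s) (δ : ℝ) : 0 < Z s δ :=
  setIntegral_pos_of_forall_pos hs hμ (integrableOn_exp_neg_mul hL hs hμs hK δ)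
    fun _ _ => exp_pos _

lemma partitionFunction_zero : Z s 0 = μ.real s := by
  simp [partitionFunction]

lemma partitionFunction_add_sdiff (hL : Measurable L) (hs : MeasurableSet s) (hμs : μ s ≠ ∞)
    (hK : ∀ x ∈ s, |L x| ≤ K) (ht : MeasurableSet t) (hts : t ⊆ s) (δ : ℝ) :
    Z t δ + Z (s \ t) δ = Z s δ := by
  have := integral_inter_add_sdiff ht (integrableOn_exp_neg_mul hL hs hμs hK δ)
  rwa [inter_eq_right.2 hts] at this

lemma continuous_partitionFunction (hL : Measurable L) (hs : MeasurableSet s) (hμs : μ s ≠ ∞)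
    (hK : ∀ x ∈ s, |L x| ≤ K) : Continuous (Z s) := by
  refine continuous_iff_continuousAt.2 fun δ₀ => continuousAt_of_dominated
    (bound := fun _ => exp ((|δ₀| + 1) * K)) (Eventually.of_forall fun δ => by fun_prop) ?_
    (integrableOn_const hμs) (Eventually.of_forall fun x => by fun_prop)
  filter_upwards [Metric.ball_mem_nhds δ₀ one_pos] with δ hδ
  filter_upwards [ae_restrict_mem hs] with x hx
  rw [norm_of_nonneg (exp_pos _).le]
  refine exp_le_exp.2 (neg_mul_le_mul_of_abs_le ?_ (hK x hx))
  have := abs_sub_abs_le_abs_sub δ δ₀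
  rw [Metric.mem_ball, Real.dist_eq] at hδ
  linarith

lemma exp_mul_partitionFunction_le (hL : Measurable L) (hs : MeasurableSet s) (hμs : μ s ≠ ∞)
    (hK : ∀ x ∈ s, |L x| ≤ K) (hM : ∀ x ∈ s, L x ≤ M) {a b : ℝ} (hab : a ≤ b) :
    exp (-(b - a) * M) * Z s a ≤ Z s b := by
  have hint := integrableOn_exp_neg_mul hL hs hμs hK
  unfold partitionFunction
  rw [← integral_const_mul]
  refine setIntegral_mono_on ((hint a).const_mul _) (hint b) hs fun x hx => ?_
  rw [← exp_add]
  exact exp_le_exp.2 (by nlinarith [hM x hx])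

lemma partitionFunction_lt_exp_mul (hL : Measurable L) (hs : MeasurableSet s) (hμs : μ s ≠ ∞)
    (hK : ∀ x ∈ s, |L x| ≤ K) (hμ : 0 < μ s) (hM : ∀ x ∈ s, M < L x) {a b : ℝ} (hab : a < b) :
    Z s b < exp (-(b - a) * M) * Z s a := by
  have hint := integrableOn_exp_neg_mul hL hs hμs hK
  unfold partitionFunction
  rw [← integral_const_mul, ← sub_pos, ← integral_sub ((hint a).const_mul _) (hint b)]
  refine setIntegral_pos_of_forall_pos hs hμ (((hint a).const_mul _).sub (hint b)) fun x hx => ?_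
  rw [sub_pos, ← exp_add]
  exact exp_lt_exp.2 (by nlinarith [hM x hx])

lemma strictAnti_partitionFunction_div (hL : Measurable L) (hs : MeasurableSet s)
    (hμs : μ s ≠ ∞) (hKs : ∀ x ∈ s, |L x| ≤ K) (hμs₀ : 0 < μ s) (hMs : ∀ x ∈ s, L x ≤ M)
    (ht : MeasurableSet t) (hμt : μ t ≠ ∞) (hKt : ∀ x ∈ t, |L x| ≤ K) (hμt₀ : 0 < μ t)
    (hMt : ∀ x ∈ t, M < L x) :
    StrictAnti fun δ => Z t δ / Z s δ := by
  intro a b hab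
  have hsa := partitionFunction_pos hL hs hμs hKs hμs₀ a
  have htb := partitionFunction_pos hL ht hμt hKt hμt₀ b
  calc Z t b / Z s b ≤ Z t b / (exp (-(b - a) * M) * Z s a) :=
        div_le_div_of_nonneg_left htb.le (by positivity)
          (exp_mul_partitionFunction_le hL hs hμs hKs hMs hab.le)
    _ < exp (-(b - a) * M) * Z t a / (exp (-(b - a) * M) * Z s a) :=
        div_lt_div_of_pos_right (partitionFunction_lt_exp_mul hL ht hμt hKt hμt₀ hMt hab)
          (by positivity)
    _ = Z t a / Z s a := mul_div_mul_left _ _ (exp_pos _).ne'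

lemma tendsto_partitionFunction_div_atTop (hL : Measurable L) (hs : MeasurableSet s)
    (hμs : μ s ≠ ∞) (hKs : ∀ x ∈ s, |L x| ≤ K) (hu : MeasurableSet u) (hus : u ⊆ s)
    (hμu₀ : 0 < μ u) (ht : MeasurableSet t) (hμt : μ t ≠ ∞) (hKt : ∀ x ∈ t, |L x| ≤ K)
    (hμt₀ : 0 < μ t) {M₁ M₂ : ℝ} (hM₁ : ∀ x ∈ u, L x ≤ M₁) (hM₂ : ∀ x ∈ t, M₂ < L x)
    (hM : M₁ < M₂) :
    Tendsto (fun δ => Z t δ / Z s δ) atTop (𝓝 0) := by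
  have hμu : μ u ≠ ∞ := measure_ne_top_of_subset hus hμs
  have hKu : ∀ x ∈ u, |L x| ≤ K := fun x hx => hKs x (hus hx)
  have hZs := partitionFunction_pos hL hs hμs hKs (hμu₀.trans_le (measure_mono hus))
  have hreal_u : 0 < μ.real u := ENNReal.toReal_pos hμu₀.ne' hμu
  have hbound : Tendsto (fun δ => μ.real t / μ.real u * exp (-(M₂ - M₁) * δ)) atTop (𝓝 0) := by
    simpa using (tendsto_exp_atBot.comp
      (tendsto_id.const_mul_atTop_of_neg (neg_lt_zero.2 (sub_pos.2 hM)))).const_mul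
        (μ.real t / μ.real u)
  refine tendsto_of_tendsto_of_tendsto_of_le_of_le' tendsto_const_nhds hbound
    (Eventually.of_forall fun δ =>
      div_nonneg (partitionFunction_pos hL ht hμt hKt hμt₀ δ).le (hZs δ).le) ?_
  filter_upwards [eventually_gt_atTop 0] with δ hδ
  have hZt : Z t δ ≤ exp (-δ * M₂) * μ.real t := by
    simpa [partitionFunction_zero] using
      (partitionFunction_lt_exp_mul hL ht hμt hKt hμt₀ hM₂ hδ).le
  have hZu : exp (-δ * M₁) * μ.real u ≤ Z u δ := by
    simpa [partitionFunction_zero] using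
      exp_mul_partitionFunction_le hL hu hμu hKu hM₁ hδ.le
  have hZus : Z u δ ≤ Z s δ :=
    setIntegral_mono_set (integrableOn_exp_neg_mul hL hs hμs hKs δ)
      (Eventually.of_forall fun _ => (exp_pos _).le) hus.eventuallyLE
  rw [div_le_iff₀ (hZs δ)]
  calc Z t δ ≤ exp (-δ * M₂) * μ.real t := hZt
    _ = μ.real t / μ.real u * exp (-(M₂ - M₁) * δ) * (exp (-δ * M₁) * μ.real u) := by
        rw [show -δ * M₂ = -(M₂ - M₁) * δ + -δ * M₁ by ring, exp_add]
        field_simp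
    _ ≤ μ.real t / μ.real u * exp (-(M₂ - M₁) * δ) * Z s δ := by
        gcongr
        exact hZu.trans hZus

theorem existsUnique_Ioi_partitionFunction_div_add_eq (hL : Measurable L)
    (hs : MeasurableSet s) (hμs : μ s ≠ ∞) (hKs : ∀ x ∈ s, |L x| ≤ K) (hμs₀ : 0 < μ s)
    (hMs : ∀ x ∈ s, L x ≤ M)
    (ht : MeasurableSet t) (hμt : μ t ≠ ∞) (hKt : ∀ x ∈ t, |L x| ≤ K) (hμt₀ : 0 < μ t)
    (hMt : ∀ x ∈ t, M < L x)
    (hu : MeasurableSet u) (hus : u ⊆ s) (hμu₀ : 0 < μ u) {M' : ℝ} (hMu : ∀ x ∈ u, L x ≤ M')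
    (hM' : M' < M) {a α : ℝ} (haα : Z s a / (Z s a + Z t a) < α) (hα : α < 1) :
    ∃! δ, δ ∈ Ioi a ∧ Z s δ / (Z s δ + Z t δ) = α := by
  have hZs := partitionFunction_pos hL hs hμs hKs hμs₀
  have hZt := partitionFunction_pos hL ht hμt hKt hμt₀
  refine existsUnique_Ioi_eq_of_strictMono ?_ ?_ ?_ haα hα
  · have hcs := continuous_partitionFunction hL hs hμs hKs
    exact hcs.div (hcs.add (continuous_partitionFunction hL ht hμt hKt))
      fun δ => (add_pos (hZs δ) (hZt δ)).ne'
  · exact strictMono_div_add hZs (fun δ => (hZt δ).le)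
      (strictAnti_partitionFunction_div hL hs hμs hKs hμs₀ hMs ht hμt hKt hμt₀ hMt)
  · exact tendsto_div_add_nhds_one hZs (tendsto_partitionFunction_div_atTop hL hs hμs hKs
      hu hus hμu₀ ht hμt hKt hμt₀ hMu hMt hM')

end PartitionFunction

theorem stmt4_general {n : ℕ} (B : Set (EuclideanSpace ℝ (Fin n))) (hB : MeasurableSet B)
    (hBbdd : Bornology.IsBounded B)
    (Ll : EuclideanSpace ℝ (Fin n) → ℝ) (hLl : Continuous Ll)
    (δ₀ Ml : ℝ)
    (θ' : EuclideanSpace ℝ (Fin n)) (hθ' : θ' ∈ interior B) (hθ'M : Ll θ' < Ml)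
    (C : Set (EuclideanSpace ℝ (Fin n))) (hCdef : C = {θ ∈ B | Ll θ ≤ Ml})
    (hCpos : 0 < volume C) (hBCpos : 0 < volume (B \ C)) :
    ∀ α : ℝ,
      (∫ θ in C, Real.exp (-δ₀ * Ll θ)) / (∫ θ in B, Real.exp (-δ₀ * Ll θ)) < α → α < 1 →
      ∃! δ : ℝ, δ ∈ Set.Ioi δ₀ ∧
        (∫ θ in C, Real.exp (-δ * Ll θ)) / (∫ θ in B, Real.exp (-δ * Ll θ)) = α := by
  intro α hδ₀α hα1
  have hL := hLl.measurable
  obtain ⟨K, hK⟩ : ∃ K, ∀ θ ∈ B, |Ll θ| ≤ K :=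
    (hBbdd.isCompact_closure.exists_bound_of_continuousOn hLl.continuousOn).imp
      fun K hK θ hθ => hK θ (subset_closure hθ)
  have hμB : volume B ≠ ∞ := hBbdd.measure_lt_top.ne
  have hCB : C ⊆ B := hCdef ▸ sep_subset B _
  have hC : MeasurableSet C := hCdef ▸ hB.inter (measurableSet_le hL measurable_const)
  have hMC : ∀ θ ∈ C, Ll θ ≤ Ml := fun θ hθ => (hCdef ▸ hθ).2
  have hMD : ∀ θ ∈ B \ C, Ml < Ll θ := fun θ hθ => not_le.1 fun h => hθ.2 (hCdef ▸ ⟨hθ.1, h⟩)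
  have hμC := measure_ne_top_of_subset hCB hμB
  have hKC : ∀ θ ∈ C, |Ll θ| ≤ K := fun θ hθ => hK θ (hCB hθ)
  obtain ⟨M', hθ'M', hM'⟩ := exists_between hθ'M
  set U := interior B ∩ Ll ⁻¹' Iio M'
  have hU : IsOpen U := isOpen_interior.inter (isOpen_Iio.preimage hLl)
  have hUC : U ⊆ C := fun θ hθ => hCdef ▸ ⟨interior_subset hθ.1, hθ.2.le.trans hM'.le⟩
  have hΔ : ∀ δ, (∫ θ in C, exp (-δ * Ll θ)) / (∫ θ in B, exp (-δ * Ll θ)) =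
      partitionFunction volume Ll C δ /
        (partitionFunction volume Ll C δ + partitionFunction volume Ll (B \ C) δ) := fun δ => by
    rw [partitionFunction_add_sdiff hL hB hμB hK hC hCB]; rfl
  simp only [hΔ] at hδ₀α ⊢
  exact existsUnique_Ioi_partitionFunction_div_add_eq hL hC hμC hKC hCpos hMC (hB.diff hC)
    (measure_ne_top_of_subset sdiff_subset hμB) (fun θ hθ => hK θ hθ.1) hBCpos hMD
    hU.measurableSet hUC (hU.measure_pos volume ⟨θ', hθ', hθ'M'⟩) (fun θ hθ => hθ.2.le) hM'
    hδ₀α hα1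

theorem stmt4 {n : ℕ} (B : Set (EuclideanSpace ℝ (Fin n))) (hB : MeasurableSet B)
    (hBbdd : Bornology.IsBounded B)
    (Ll : EuclideanSpace ℝ (Fin n) → ℝ) (hLl : Continuous Ll)
    (Lmin δ₀ Ml : ℝ) (hδ₀ : 0 ≤ δ₀)
    (hbdd : ∀ θ ∈ B, Lmin ≤ Ll θ)
    (hpos : 0 < ∫ θ in B, Real.exp (-δ₀ * Ll θ))
    (θ' : EuclideanSpace ℝ (Fin n)) (hθ' : θ' ∈ interior B) (hθ'M : Ll θ' < Ml)
    (C : Set (EuclideanSpace ℝ (Fin n))) (hCdef : C = {θ ∈ B | Ll θ ≤ Ml})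
    (hCpos : 0 < volume C) (hBCpos : 0 < volume (B \ C)) :
    ∀ α : ℝ,
      (∫ θ in C, Real.exp (-δ₀ * Ll θ)) / (∫ θ in B, Real.exp (-δ₀ * Ll θ)) < α → α < 1 →
      ∃! δ : ℝ, δ ∈ Set.Ioi δ₀ ∧
        (∫ θ in C, Real.exp (-δ * Ll θ)) / (∫ θ in B, Real.exp (-δ * Ll θ)) = α :=
  stmt4_general B hB hBbdd Ll hLl δ₀ Ml θ' hθ' hθ'M C hCdef hCpos hBCpos
end

section
/- Let B ⊆ ℝⁿ be measurable, L_λ : ℝⁿ → ℝ bounded below by L_min on B, δ₀ ≥ 0, and let g : B → ℝ be a measurable function. Suppose ∫_B exp(-δ₀ L_λ), ∫_B |g|·exp(-δ₀ L_λ), ∫_B L_λ·exp(-δ₀ L_λ), and ∫_B |g|·L_λ·exp(-δ₀ L_λ) all exist and are finite. Define G(δ) = (∫_B |g(θ)| exp(-δ L_λ(θ)) dθ)/(∫_B exp(-δ L_λ(θ)) dθ), i.e., G(δ) = E_δ[|g|] under the Gibbs density p_δ. Then G is differentiable on (δ₀, ∞) and G'(δ) = -Cov_δ(|g(θ)|,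 L_λ(θ)), where Cov_δ denotes covariance with respect to p_δ. -/
/-! Since `L ≥ Lmin`, for `t` near `δ > δ₀` the weight `exp (-t L)` is bounded by a constant
multiple of `exp (-δ₀ L)`. Hence both the partition function `Z t = ∫ exp (-t L)` and the
moment `N t = ∫ |g| exp (-t L)` may be differentiated under the integral sign, with
`Z' = -∫ L exp (-t L)` and `N' = -∫ |g| L exp (-t L)`, and the quotient rule for `N / Z`
gives minus the Gibbs covariance of `|g|` and `L`. -/

open MeasureTheory Real

lemma exp_neg_mul_le_of_le_s5 {L Lmin δ₀ δ b : ℝ} (hL : Lmin ≤ L) (hδ : δ₀ ≤ δ) (hb : δ ≤ b) :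
    exp (-δ * L) ≤ exp ((b - δ₀) * |Lmin|) * exp (-δ₀ * L) := by
  rw [← exp_add, exp_le_exp]
  nlinarith [mul_le_mul_of_nonneg_left hL (sub_nonneg.2 hδ), neg_abs_le Lmin, abs_nonneg Lmin]

lemma norm_mul_exp_neg_mul_le {a L Lmin δ₀ δ b : ℝ} (hL : Lmin ≤ L) (hδ : δ₀ ≤ δ) (hb : δ ≤ b) :
    ‖a * exp (-δ * L)‖ ≤ exp ((b - δ₀) * |Lmin|) * ‖a * exp (-δ₀ * L)‖ := by
  simp only [norm_mul, norm_eq_abs, abs_exp]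
  rw [mul_left_comm]
  exact mul_le_mul_of_nonneg_left (exp_neg_mul_le_of_le_s5 hL hδ hb) (abs_nonneg _)

section GibbsIntegral

variable {α : Type*} [MeasurableSpace α] {μ : Measure α} {f L : α → ℝ} {Lmin δ₀ δ : ℝ}

lemma MeasureTheory.Integrable.mul_exp_neg_mul_of_le_s5 (hf : AEStronglyMeasurable f μ)
    (hL : AEStronglyMeasurable L μ) (hbdd : ∀ᵐ θ ∂μ, Lmin ≤ L θ)
    (h₀ : Integrable (fun θ => f θ * exp (-δ₀ * L θ)) μ) (hδ : δ₀ ≤ δ) :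
    Integrable (fun θ => f θ * exp (-δ * L θ)) μ :=
  Integrable.mono' (h₀.norm.const_mul _) (by fun_prop) <| by
    filter_upwards [hbdd] with θ hθ using norm_mul_exp_neg_mul_le hθ hδ le_rfl

theorem hasDerivAt_integral_mul_exp_neg_mul (hf : AEStronglyMeasurable f μ)
    (hL : AEStronglyMeasurable L μ) (hbdd : ∀ᵐ θ ∂μ, Lmin ≤ L θ)
    (h₀ : Integrable (fun θ => f θ * exp (-δ₀ * L θ)) μ)
    (h₁ : Integrable (fun θ => f θ * L θ * exp (-δ₀ * L θ)) μ) (hδ : δ₀ < δ) :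
    HasDerivAt (fun t => ∫ θ, f θ * exp (-t * L θ) ∂μ)
      (-∫ θ, f θ * L θ * exp (-δ * L θ) ∂μ) δ := by
  have hball : Metric.ball δ (δ - δ₀) ∈ nhds δ := Metric.ball_mem_nhds δ (sub_pos.2 hδ)
  have hderiv : ∀ θ t, HasDerivAt (fun t => f θ * exp (-t * L θ))
      (-(f θ * L θ * exp (-t * L θ))) t := fun θ t =>
    (((hasDerivAt_neg t).mul_const (L θ)).exp.const_mul (f θ)).congr_deriv (by ring)
  rw [← integral_neg]
  refine (hasDerivAt_integral_of_dominated_loc_of_deriv_le hball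
    (Filter.Eventually.of_forall fun t => by fun_prop)
    (h₀.mul_exp_neg_mul_of_le_s5 hf hL hbdd hδ.le) (by fun_prop) ?_
    (h₁.norm.const_mul (exp ((δ + (δ - δ₀) - δ₀) * |Lmin|)))
    (Filter.Eventually.of_forall fun θ t _ => hderiv θ t)).2
  filter_upwards [hbdd] with θ hθ t ht
  rw [Metric.mem_ball, Real.dist_eq, abs_lt] at ht
  rw [norm_neg]
  exact norm_mul_exp_neg_mul_le hθ (by linarith) (by linarith)

theorem hasDerivAt_integral_mul_exp_div_integral_exp (hf : AEStronglyMeasurable f μ)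
    (hL : AEStronglyMeasurable L μ) (hbdd : ∀ᵐ θ ∂μ, Lmin ≤ L θ)
    (hZ : Integrable (fun θ => exp (-δ₀ * L θ)) μ) (hZpos : 0 < ∫ θ, exp (-δ₀ * L θ) ∂μ)
    (hf₀ : Integrable (fun θ => f θ * exp (-δ₀ * L θ)) μ)
    (hL₀ : Integrable (fun θ => L θ * exp (-δ₀ * L θ)) μ)
    (hfL₀ : Integrable (fun θ => f θ * L θ * exp (-δ₀ * L θ)) μ) (hδ : δ₀ < δ) :
    HasDerivAt (fun t => (∫ θ, f θ * exp (-t * L θ) ∂μ) / ∫ θ, exp (-t * L θ) ∂μ)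
      (-((∫ θ, f θ * L θ * (exp (-δ * L θ) / ∫ γ, exp (-δ * L γ) ∂μ) ∂μ) -
          (∫ θ, f θ * (exp (-δ * L θ) / ∫ γ, exp (-δ * L γ) ∂μ) ∂μ) *
            (∫ θ, L θ * (exp (-δ * L θ) / ∫ γ, exp (-δ * L γ) ∂μ) ∂μ))) δ := by
  have hZ' : Integrable (fun θ => 1 * exp (-δ₀ * L θ)) μ := by simpa using hZ
  have hN := hasDerivAt_integral_mul_exp_neg_mul hf hL hbdd hf₀ hfL₀ hδ
  have hD := hasDerivAt_integral_mul_exp_neg_mul aestronglyMeasurable_const hL hbdd hZ'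
    (by simpa using hL₀) hδ
  simp only [one_mul] at hD
  have : NeZero μ := ⟨by rintro rfl; simp at hZpos⟩
  have hZδ : 0 < ∫ θ, exp (-δ * L θ) ∂μ := integral_exp_pos <| by
    simpa using hZ'.mul_exp_neg_mul_of_le_s5 aestronglyMeasurable_const hL hbdd hδ.le
  refine (hN.div hD hZδ.ne').congr_deriv ?_
  simp only [← mul_div_assoc, integral_div]
  -- abstract the integrals so that `field_simp` does not normalise their integrands apart
  generalize ∫ θ, exp (-δ * L θ) ∂μ = Z at hZδ ⊢
  generalize ∫ θ, f θ * L θ * exp (-δ * L θ) ∂μ = A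
  field_simp
  ring

end GibbsIntegral

theorem stmt5_general {n : ℕ} (B : Set (EuclideanSpace ℝ (Fin n))) (hB : MeasurableSet B)
    (Ll g : EuclideanSpace ℝ (Fin n) → ℝ) (hLl : Measurable Ll) (hg : Measurable g)
    (Lmin δ₀ : ℝ)
    (hbdd : ∀ θ ∈ B, Lmin ≤ Ll θ)
    (hint1 : IntegrableOn (fun θ => Real.exp (-δ₀ * Ll θ)) B)
    (hpos : 0 < ∫ θ in B, Real.exp (-δ₀ * Ll θ))
    (hint2 : IntegrableOn (fun θ => |g θ| * Real.exp (-δ₀ * Ll θ)) B)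
    (hint3 : IntegrableOn (fun θ => Ll θ * Real.exp (-δ₀ * Ll θ)) B)
    (hint4 : IntegrableOn (fun θ => |g θ| * Ll θ * Real.exp (-δ₀ * Ll θ)) B) :
    ∀ δ, δ₀ < δ →
      HasDerivAt
        (fun t => (∫ θ in B, |g θ| * Real.exp (-t * Ll θ)) / (∫ θ in B, Real.exp (-t * Ll θ)))
        (-((∫ θ in B, |g θ| * Ll θ * (Real.exp (-δ * Ll θ) / ∫ γ in B, Real.exp (-δ * Ll γ))) -
            (∫ θ in B, |g θ| * (Real.exp (-δ * Ll θ) / ∫ γ in B, Real.exp (-δ * Ll γ))) *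
              (∫ θ in B, Ll θ * (Real.exp (-δ * Ll θ) / ∫ γ in B, Real.exp (-δ * Ll γ)))))
        δ :=
  fun _ hδ => hasDerivAt_integral_mul_exp_div_integral_exp hg.abs.aestronglyMeasurable
    hLl.aestronglyMeasurable (ae_restrict_of_forall_mem hB hbdd) hint1 hpos hint2 hint3 hint4 hδ

theorem stmt5 {n : ℕ} (B : Set (EuclideanSpace ℝ (Fin n))) (hB : MeasurableSet B)
    (Ll g : EuclideanSpace ℝ (Fin n) → ℝ) (hLl : Measurable Ll) (hg : Measurable g)
    (Lmin δ₀ : ℝ) (hδ₀ : 0 ≤ δ₀)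
    (hbdd : ∀ θ ∈ B, Lmin ≤ Ll θ)
    (hint1 : IntegrableOn (fun θ => Real.exp (-δ₀ * Ll θ)) B)
    (hpos : 0 < ∫ θ in B, Real.exp (-δ₀ * Ll θ))
    (hint2 : IntegrableOn (fun θ => |g θ| * Real.exp (-δ₀ * Ll θ)) B)
    (hint3 : IntegrableOn (fun θ => Ll θ * Real.exp (-δ₀ * Ll θ)) B)
    (hint4 : IntegrableOn (fun θ => |g θ| * Ll θ * Real.exp (-δ₀ * Ll θ)) B) :
    ∀ δ, δ₀ < δ →
      HasDerivAt
        (fun t => (∫ θ in B, |g θ| * Real.exp (-t * Ll θ)) / (∫ θ in B, Real.exp (-t * Ll θ)))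
        (-((∫ θ in B, |g θ| * Ll θ * (Real.exp (-δ * Ll θ) / ∫ γ in B, Real.exp (-δ * Ll γ))) -
            (∫ θ in B, |g θ| * (Real.exp (-δ * Ll θ) / ∫ γ in B, Real.exp (-δ * Ll γ))) *
              (∫ θ in B, Ll θ * (Real.exp (-δ * Ll θ) / ∫ γ in B, Real.exp (-δ * Ll γ)))))
        δ :=
  stmt5_general B hB Ll g hLl hg Lmin δ₀ hbdd hint1 hpos hint2 hint3 hint4
end
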